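/- Let φ be a self-map of the (q+1)-homogeneous rooted tree T with q ≥ 2, and let 1 ≤ p < ∞. If the composition operator C_φ is bounded on T_p, then there exists M > 0 such that |φ(v)| ≤ |v| + M for all v ∈ T. -/

import Mathlib

open scoped BigOperators Classical

noncomputable section

/-- `treeC q n` is the number `c_n` of vertices at level `n` of the
`(q+1)`-homogeneous rooted tree: `c_0 = 1` and `c_n = (q+1) q^(n-1)` for `n ≥ 1`. -/
def treeC (q n : ℕ) : ℕ := if n = 0 then 1 else (q + 1) * q ^ (n - 1)

/-- An abstract `(q+1)`-homogeneous rooted tree, described by its vertex set, root,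
level function `|·|` (graph distance to the root), and the level counts:
level `n` contains exactly `c_n = treeC q n` vertices. -/
structure HomTree (q : ℕ) where
  V : Type
  root : V
  level : V → ℕ
  level_eq_zero_iff : ∀ v : V, level v = 0 ↔ v = root
  finiteLevel : ∀ n : ℕ, {v : V | level v = n}.Finite
  card_level : ∀ n : ℕ, (finiteLevel n).toFinset.card = treeC q n

namespace HomTree

variable {q : ℕ} (T : HomTree q)

/-- The set `D_n` of vertices of level `n`, as a finset. -/
def levelFinset (n : ℕ) : Finset T.V := (T.finiteLevel n).toFinset

/-- `M_p(n, f)` for `0 < p < ∞`: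
`M_p(n,f) = ((1/c_n) ∑_{|v|=n} |f v|^p)^(1/p)` (which equals `|f o|` for `n = 0`). -/
def Mp (p : ℝ) (n : ℕ) (f : T.V → ℂ) : ℝ :=
  ((1 / (treeC q n : ℝ)) * ∑ v ∈ T.levelFinset n, ‖f v‖ ^ p) ^ (1 / p)

/-- `M_∞(n, f) = max_{|v| = n} |f v|`. -/
def Minf (n : ℕ) (f : T.V → ℂ) : ℝ :=
  sSup ((fun v => ‖f v‖) '' {v : T.V | T.level v = n})

/-- `f ∈ T_p`, i.e. `‖f‖_p = sup_n M_p(n,f) < ∞`. -/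
def memTp (p : ℝ) (f : T.V → ℂ) : Prop := BddAbove (Set.range fun n => T.Mp p n f)

/-- `‖f‖_p = sup_n M_p(n, f)`. -/
def normTp (p : ℝ) (f : T.V → ℂ) : ℝ := ⨆ n, T.Mp p n f

/-- `f ∈ T_∞`. -/
def memTinf (f : T.V → ℂ) : Prop := BddAbove (Set.range fun n => T.Minf n f)

/-- `‖f‖_∞ = sup_n M_∞(n, f)`. -/
def normTinf (f : T.V → ℂ) : ℝ := ⨆ n, T.Minf n f

/-- `f ∈ T_{p,0}`: `f ∈ T_p` and `M_p(n,f) → 0` as `n → ∞`. -/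
def memTp0 (p : ℝ) (f : T.V → ℂ) : Prop :=
  T.memTp p f ∧ Filter.Tendsto (fun n => T.Mp p n f) Filter.atTop (nhds 0)

/-- `f ∈ T_{∞,0}`. -/
def memTinf0 (f : T.V → ℂ) : Prop :=
  T.memTinf f ∧ Filter.Tendsto (fun n => T.Minf n f) Filter.atTop (nhds 0)

/-- `N_φ(n, w)`: the number of preimages of `w` under `φ` at level `n`. -/
def Nphi (phi : T.V → T.V) (n : ℕ) (w : T.V) : ℕ :=
  ((T.levelFinset n).filter fun v => phi v = w).card

/-- `N_{m,n} = max_{|w| = m} N_φ(n, w)`. -/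
def Nmax (phi : T.V → T.V) (m n : ℕ) : ℕ :=
  (T.levelFinset m).sup fun w => T.Nphi phi n w

/-- `C_φ` is a bounded operator on `T_p`: it maps `T_p` into `T_p` and
`‖f ∘ φ‖_p ≤ C ‖f‖_p` for some constant `C`. -/
def BoundedCompTp (p : ℝ) (phi : T.V → T.V) : Prop :=
  (∀ f : T.V → ℂ, T.memTp p f → T.memTp p (f ∘ phi)) ∧
  ∃ C : ℝ, ∀ f : T.V → ℂ, T.memTp p f → T.normTp p (f ∘ phi) ≤ C * T.normTp p f

/-- The operator norm of `C_φ` on `T_p`: `sup {‖f ∘ φ‖_p : f ∈ T_p, ‖f‖_p = 1}`. -/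
def opNormTp (p : ℝ) (phi : T.V → T.V) : ℝ :=
  sSup {x : ℝ | ∃ f : T.V → ℂ, T.memTp p f ∧ T.normTp p f = 1 ∧ x = T.normTp p (f ∘ phi)}

/-- `C_φ` is a bounded operator on `T_{p,0}`. -/
def BoundedCompTp0 (p : ℝ) (phi : T.V → T.V) : Prop :=
  (∀ f : T.V → ℂ, T.memTp0 p f → T.memTp0 p (f ∘ phi)) ∧
  ∃ C : ℝ, ∀ f : T.V → ℂ, T.memTp0 p f → T.normTp p (f ∘ phi) ≤ C * T.normTp p f

/-- The operator norm of `C_φ` on `T_{p,0}`. -/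
def opNormTp0 (p : ℝ) (phi : T.V → T.V) : ℝ :=
  sSup {x : ℝ | ∃ f : T.V → ℂ, T.memTp0 p f ∧ T.normTp p f = 1 ∧ x = T.normTp p (f ∘ phi)}

/-- `C_φ` is a bounded operator on `T_{∞,0}`. -/
def BoundedCompTinf0 (phi : T.V → T.V) : Prop :=
  (∀ f : T.V → ℂ, T.memTinf0 f → T.memTinf0 (f ∘ phi)) ∧
  ∃ C : ℝ, ∀ f : T.V → ℂ, T.memTinf0 f → T.normTinf (f ∘ phi) ≤ C * T.normTinf f

end HomTree

lemma treeC_pos' {q : ℕ} (hq : 1 ≤ q) (n : ℕ) : 0 < treeC q n := by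
  unfold treeC
  split
  · exact one_pos
  · exact Nat.mul_pos (Nat.succ_pos q) (pow_pos hq _)

/-!
Testing `C_φ` on the indicator of the single vertex `φ v` gives
`c_{|v|}^{-1/p} ≤ M_p(|v|, C_φ 1_{φ v}) ≤ ‖C_φ‖ · c_{|φ v|}^{-1/p}`, i.e. `c_{|φ v|} ≤ ‖C_φ‖^p c_{|v|}`.
Since `c_n` grows like `q^n` with `q ≥ 2`, this bounds `|φ v| - |v|`.
-/

lemma treeC_pos {q : ℕ} (hq : 0 < q) (n : ℕ) : 0 < treeC q n := by
  unfold treeC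
  split_ifs
  · exact one_pos
  · positivity

lemma treeC_mul_pow_le {q n m : ℕ} (hq : 0 < q) (h : n < m) :
    treeC q n * q ^ (m - n - 1) ≤ treeC q m := by
  unfold treeC
  rcases Nat.eq_zero_or_pos n with rfl | hn
  · rw [if_pos rfl, if_neg h.ne', one_mul, Nat.sub_zero]
    exact Nat.le_mul_of_pos_left _ (Nat.succ_pos q)
  · rw [if_neg hn.ne', if_neg (by omega), mul_assoc, ← pow_add]
    exact Nat.mul_le_mul_left _ (Nat.pow_le_pow_right hq (by omega))

lemma le_add_of_treeC_le_mul {q n m k : ℕ} {K : ℝ} (hq : 2 ≤ q) (hK : K < 2 ^ k)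
    (h : (treeC q m : ℝ) ≤ K * treeC q n) : m ≤ n + k := by
  by_contra! hlt
  have hcn : (0 : ℝ) < treeC q n := by exact_mod_cast treeC_pos (by omega) n
  have hgrowth : (treeC q n : ℝ) * q ^ (m - n - 1) ≤ treeC q m := by
    exact_mod_cast treeC_mul_pow_le (by omega) (by omega : n < m)
  have hpow : (2 : ℝ) ^ k ≤ (q : ℝ) ^ (m - n - 1) :=
    calc (2 : ℝ) ^ k ≤ (2 : ℝ) ^ (m - n - 1) := pow_le_pow_right₀ one_le_two (by omega)
      _ ≤ (q : ℝ) ^ (m - n - 1) := pow_le_pow_left₀ zero_le_two (by exact_mod_cast hq) _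
  nlinarith

lemma le_rpow_mul_of_inv_rpow_le {a b C p : ℝ} (ha : 0 < a) (hb : 0 < b) (hp : 0 < p)
    (h : a⁻¹ ^ p⁻¹ ≤ C * b⁻¹ ^ p⁻¹) : b ≤ C ^ p * a := by
  have hb' : 0 < b⁻¹ ^ p⁻¹ := by positivity
  have hC : 0 ≤ C := nonneg_of_mul_nonneg_left ((by positivity : 0 ≤ a⁻¹ ^ p⁻¹).trans h) hb'
  have hinv : a⁻¹ ≤ C ^ p * b⁻¹ := by
    have := Real.rpow_le_rpow (by positivity) h hp.le
    rwa [Real.mul_rpow hC hb'.le, Real.rpow_inv_rpow (by positivity) hp.ne',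
      Real.rpow_inv_rpow (by positivity) hp.ne'] at this
  rw [← div_eq_mul_inv, le_div_iff₀ hb, inv_mul_le_iff₀ ha] at hinv
  linarith

namespace HomTree

variable {q : ℕ} (T : HomTree q) {p : ℝ}

lemma mem_levelFinset {n : ℕ} {v : T.V} : v ∈ T.levelFinset n ↔ T.level v = n :=
  Set.Finite.mem_toFinset _

lemma Mp_le_normTp {f : T.V → ℂ} (hf : T.memTp p f) (n : ℕ) : T.Mp p n f ≤ T.normTp p f :=
  le_ciSup hf n

lemma norm_mul_inv_rpow_le_Mp (hp : 0 < p) (f : T.V → ℂ) (v : T.V) :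
    ‖f v‖ * (treeC q (T.level v) : ℝ)⁻¹ ^ p⁻¹ ≤ T.Mp p (T.level v) f := by
  have hsingle : ‖f v‖ ^ p ≤ ∑ u ∈ T.levelFinset (T.level v), ‖f u‖ ^ p :=
    Finset.single_le_sum (f := fun u => ‖f u‖ ^ p) (fun u _ => by positivity) (T.mem_levelFinset.mpr rfl)
  calc ‖f v‖ * (treeC q (T.level v) : ℝ)⁻¹ ^ p⁻¹
      = ((treeC q (T.level v) : ℝ)⁻¹ * ‖f v‖ ^ p) ^ p⁻¹ := by
        rw [Real.mul_rpow (by positivity) (by positivity),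
          Real.rpow_rpow_inv (norm_nonneg _) hp.ne', mul_comm]
    _ ≤ T.Mp p (T.level v) f := by
        rw [Mp, one_div, one_div]
        gcongr

lemma Mp_single (hp : 0 < p) (w : T.V) (n : ℕ) :
    T.Mp p n (Pi.single w 1) = if n = T.level w then (treeC q n : ℝ)⁻¹ ^ p⁻¹ else 0 := by
  have hsum : ∑ u ∈ T.levelFinset n, ‖(Pi.single w 1 : T.V → ℂ) u‖ ^ p
      = if n = T.level w then 1 else 0 := by
    simp_rw [Pi.single_apply, apply_ite (fun z : ℂ => ‖z‖ ^ p), norm_one, Real.one_rpow,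
      norm_zero, Real.zero_rpow hp.ne', Finset.sum_ite_eq', T.mem_levelFinset, eq_comm]
  rw [Mp, hsum, one_div, one_div]
  split_ifs
  · rw [mul_one]
  · rw [mul_zero, Real.zero_rpow (inv_ne_zero hp.ne')]

lemma Mp_single_le (hp : 0 < p) (w : T.V) (n : ℕ) :
    T.Mp p n (Pi.single w 1) ≤ (treeC q (T.level w) : ℝ)⁻¹ ^ p⁻¹ := by
  rw [T.Mp_single hp]
  split_ifs with hn
  · rw [hn]
  · positivity

lemma memTp_single (hp : 0 < p) (w : T.V) : T.memTp p (Pi.single w 1) :=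
  ⟨_, Set.forall_mem_range.mpr (T.Mp_single_le hp w)⟩

lemma normTp_single (hp : 0 < p) (w : T.V) :
    T.normTp p (Pi.single w 1) = (treeC q (T.level w) : ℝ)⁻¹ ^ p⁻¹ :=
  le_antisymm (ciSup_le (T.Mp_single_le hp w)) <| by
    simpa [T.Mp_single hp] using T.Mp_le_normTp (T.memTp_single hp w) (T.level w)

lemma exists_treeC_level_le_of_boundedCompTp (hq : 0 < q) (hp : 0 < p) {phi : T.V → T.V}
    (hb : T.BoundedCompTp p phi) :
    ∃ K : ℝ, ∀ v, (treeC q (T.level (phi v)) : ℝ) ≤ K * treeC q (T.level v) := by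
  obtain ⟨hmap, C, hC⟩ := hb
  refine ⟨C ^ p, fun v => ?_⟩
  have hf := T.memTp_single hp (phi v)
  refine le_rpow_mul_of_inv_rpow_le (by exact_mod_cast treeC_pos hq _)
    (by exact_mod_cast treeC_pos hq _) hp ?_
  calc (treeC q (T.level v) : ℝ)⁻¹ ^ p⁻¹
      = ‖(Pi.single (phi v) 1 ∘ phi) v‖ * (treeC q (T.level v) : ℝ)⁻¹ ^ p⁻¹ := by simp
    _ ≤ T.Mp p (T.level v) (Pi.single (phi v) 1 ∘ phi) := T.norm_mul_inv_rpow_le_Mp hp _ v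
    _ ≤ T.normTp p (Pi.single (phi v) 1 ∘ phi) := T.Mp_le_normTp (hmap _ hf) _
    _ ≤ C * T.normTp p (Pi.single (phi v) 1) := hC _ hf
    _ = C * (treeC q (T.level (phi v)) : ℝ)⁻¹ ^ p⁻¹ := by rw [T.normTp_single hp]

end HomTree

/-- If `q ≥ 2`, `1 ≤ p < ∞` and `C_φ` is bounded on `T_p`, then there is `M > 0` with
`|φ v| ≤ |v| + M` for all `v`. -/
theorem level_growth_of_bounded_comp (q : ℕ) (hq : 2 ≤ q) (T : HomTree q)
    (p : ℝ) (hp : 1 ≤ p) (phi : T.V → T.V) (hb : T.BoundedCompTp p phi) :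
    ∃ M : ℕ, 0 < M ∧ ∀ v : T.V, T.level (phi v) ≤ T.level v + M := by
  obtain ⟨K, hK⟩ := T.exists_treeC_level_le_of_boundedCompTp (by omega) (by linarith) hb
  obtain ⟨k, hk⟩ := pow_unbounded_of_one_lt K one_lt_two
  exact ⟨k + 1, k.succ_pos, fun v =>
    (le_add_of_treeC_le_mul hq hk (hK v)).trans (Nat.add_le_add_left k.le_succ _)⟩
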